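/- (Abstract Itô isometry inequality.) Let (E_t) be a resolution of identity on a complex Hilbert space H, M ∈ H, M_t := E_t M, and μ the Borel measure μ(α) = ‖E(α)M‖². Let A(t) = Σ_{k=0}^{n-1} A_k 1_{(t_k,t_{k+1}]}(t) be a simple adapted operator-valued function, where each A_k is a bounded operator on the span of increments {M_{s_2} − M_{s_1} : (s_1,s_2] ⊆ (t_k,T]} with operator norm ‖A_k‖_{L_M(t_k)}, and each A_k commutes partially with the resolution of identity: A_k E_s g = E_s A_k g for all g in this span and all s ∈ [t_k, T]. Then ‖Σ_{k=0}^{n-1} A_k (M_{t_{k+1}} − M_{t_k})‖²_H ≤ Σ_{k=0}^{n-1} ‖A_k‖²_{L_M(t_k)} μ((t_k,t_{k+1}]). -/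

import Mathlib

open scoped InnerProductSpace

/-! Write `Δ_k = M_{t_{k+1}} - M_{t_k}`. The vectors `A_k Δ_k` are pairwise orthogonal: by
partial commutation, `A_k Δ_k` is killed by `E_{t_k}` and fixed by every `E_s` with `s ≥ t_{k+1}`,
and `E_{t_k}` is self-adjoint. Pythagoras then reduces the claim to the termwise bound
`‖A_k Δ_k‖ ≤ ‖A_k‖_{L_M(t_k)} ‖Δ_k‖`, valid because `Δ_k ∈ H_M(t_k)`. -/

/-- The span of increments `M_{s₂} - M_{s₁}` with `(s₁,s₂] ⊆ (t,T]`. -/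
def HMspan {H : Type*} [NormedAddCommGroup H] [InnerProductSpace ℂ H]
    (E : ℝ → H →L[ℂ] H) (M : H) (t T : ℝ) : Submodule ℂ H :=
  Submodule.span ℂ {g | ∃ s₁ s₂ : ℝ, t ≤ s₁ ∧ s₁ < s₂ ∧ s₂ ≤ T ∧ g = E s₂ M - E s₁ M}

section InnerProductSpace

variable {𝕜 F : Type*} [RCLike 𝕜] [NormedAddCommGroup F] [InnerProductSpace 𝕜 F]

theorem norm_sum_sq_eq_sum_norm_sq_of_pairwise_inner_eq_zero {ι : Type*} (s : Finset ι)
    {v : ι → F} (h : Pairwise fun i j => ⟪v i, v j⟫_𝕜 = 0) :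
    ‖∑ i ∈ s, v i‖ ^ 2 = ∑ i ∈ s, ‖v i‖ ^ 2 := by
  classical
  induction s using Finset.induction_on with
  | empty => simp
  | insert i s hi ih =>
    have hi_orth : ⟪v i, ∑ j ∈ s, v j⟫_𝕜 = 0 := (inner_sum _ _ _).trans <|
      Finset.sum_eq_zero fun j hj => h (ne_of_mem_of_not_mem hj hi).symm
    rw [Finset.sum_insert hi, Finset.sum_insert hi, norm_add_sq (𝕜 := 𝕜), hi_orth, ih]
    simp

theorem pairwise_inner_eq_zero_of_lt {ι : Type*} [LinearOrder ι] {v : ι → F}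
    (h : ∀ i j, i < j → ⟪v i, v j⟫_𝕜 = 0) : Pairwise fun i j => ⟪v i, v j⟫_𝕜 = 0 := by
  intro i j hij
  rcases hij.lt_or_gt with hij | hji
  · exact h i j hij
  · rw [← inner_conj_symm, h j i hji, map_zero]

theorem inner_eq_zero_of_map_eq_self_of_map_eq_zero [CompleteSpace F] {P : F →L[𝕜] F}
    (hP : ContinuousLinearMap.adjoint P = P) {x y : F} (hx : P x = x) (hy : P y = 0) :
    ⟪x, y⟫_𝕜 = 0 := by
  rw [← hx, ← hP, ContinuousLinearMap.adjoint_inner_left, hy, inner_zero_right]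

theorem ContinuousLinearMap.norm_apply_le_norm_comp_subtypeL (A : F →L[𝕜] F)
    {S : Submodule 𝕜 F} {g : F} (hg : g ∈ S) : ‖A g‖ ≤ ‖A.comp S.subtypeL‖ * ‖g‖ :=
  (A.comp S.subtypeL).le_opNorm ⟨g, hg⟩

end InnerProductSpace

section Increments

variable {H : Type*} [NormedAddCommGroup H] [InnerProductSpace ℂ H] {E : ℝ → H →L[ℂ] H}

theorem increment_mem_HMspan (M : H) {a b T : ℝ} (hab : a < b) (hbT : b ≤ T) :
    E b M - E a M ∈ HMspan E M a T :=
  Submodule.subset_span ⟨a, b, le_rfl, hab, hbT, rfl⟩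

theorem map_increment_of_le
    (hmono : ∀ s t, s ≤ t → (E t).comp (E s) = E s ∧ (E s).comp (E t) = E s)
    {a b s : ℝ} (hab : a ≤ b) (hbs : b ≤ s) (x : H) :
    E s (E b x - E a x) = E b x - E a x := by
  rw [map_sub, ← ContinuousLinearMap.comp_apply, (hmono b s hbs).1,
    ← ContinuousLinearMap.comp_apply, (hmono a s (hab.trans hbs)).1]

theorem map_increment_left
    (hmono : ∀ s t, s ≤ t → (E t).comp (E s) = E s ∧ (E s).comp (E t) = E s)
    {a b : ℝ} (hab : a ≤ b) (x : H) : E a (E b x - E a x) = 0 := by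
  rw [map_sub, ← ContinuousLinearMap.comp_apply, (hmono a b hab).2,
    ← ContinuousLinearMap.comp_apply, (hmono a a le_rfl).1, sub_self]

variable [CompleteSpace H]

theorem inner_apply_increment_eq_zero
    (hsa : ∀ t, ContinuousLinearMap.adjoint (E t) = E t)
    (hmono : ∀ s t, s ≤ t → (E t).comp (E s) = E s ∧ (E s).comp (E t) = E s)
    {M : H} {T a b c d : ℝ} (hab : a < b) (hbc : b ≤ c) (hcd : c < d) (hdT : d ≤ T)
    {A B : H →L[ℂ] H}
    (hA : ∀ g ∈ HMspan E M a T, ∀ s, a ≤ s → s ≤ T → A (E s g) = E s (A g))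
    (hB : ∀ g ∈ HMspan E M c T, ∀ s, c ≤ s → s ≤ T → B (E s g) = E s (B g)) :
    ⟪A (E b M - E a M), B (E d M - E c M)⟫_ℂ = 0 := by
  have hcT : c ≤ T := hcd.le.trans hdT
  have hbT : b ≤ T := hbc.trans hcT
  refine inner_eq_zero_of_map_eq_self_of_map_eq_zero (hsa c) ?_ ?_
  · rw [← hA _ (increment_mem_HMspan M hab hbT) c (hab.le.trans hbc) hcT,
      map_increment_of_le hmono hab.le hbc]
  · rw [← hB _ (increment_mem_HMspan M hcd hdT) c le_rfl hcT,
      map_increment_left hmono hcd.le, map_zero]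

end Increments

theorem stmt3_general {H : Type*} [NormedAddCommGroup H] [InnerProductSpace ℂ H] [CompleteSpace H]
    (T : ℝ) (E : ℝ → H →L[ℂ] H) (M : H)
    (hsa : ∀ t, ContinuousLinearMap.adjoint (E t) = E t)
    (hmono : ∀ s t, s ≤ t → (E t).comp (E s) = E s ∧ (E s).comp (E t) = E s)
    (n : ℕ) (t : Fin (n + 1) → ℝ) (htlast : t (Fin.last n) = T)
    (htmono : StrictMono t)
    (A : Fin n → H →L[ℂ] H)
    (hcomm : ∀ (k : Fin n), ∀ g ∈ HMspan E M (t k.castSucc) T, ∀ s : ℝ,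
      t k.castSucc ≤ s → s ≤ T → A k (E s g) = E s (A k g)) :
    ‖∑ k : Fin n, A k (E (t k.succ) M - E (t k.castSucc) M)‖ ^ 2
      ≤ ∑ k : Fin n, ‖(A k).comp (HMspan E M (t k.castSucc) T).subtypeL‖ ^ 2
          * ‖E (t k.succ) M - E (t k.castSucc) M‖ ^ 2 := by
  have hstep (k : Fin n) : t k.castSucc < t k.succ := htmono Fin.castSucc_lt_succ
  have hle_T (i : Fin (n + 1)) : t i ≤ T := htlast ▸ htmono.monotone (Fin.le_last i)
  have horth : Pairwise fun j k : Fin n =>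
      ⟪A j (E (t j.succ) M - E (t j.castSucc) M),
        A k (E (t k.succ) M - E (t k.castSucc) M)⟫_ℂ = 0 :=
    pairwise_inner_eq_zero_of_lt fun j k hjk =>
      inner_apply_increment_eq_zero hsa hmono (hstep j)
        (htmono.monotone (Fin.succ_le_castSucc_iff.2 hjk)) (hstep k) (hle_T _) (hcomm j) (hcomm k)
  rw [norm_sum_sq_eq_sum_norm_sq_of_pairwise_inner_eq_zero _ horth]
  refine Finset.sum_le_sum fun k _ => ?_
  rw [← mul_pow]
  gcongr
  exact (A k).norm_apply_le_norm_comp_subtypeL (increment_mem_HMspan M (hstep k) (hle_T _))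

/-- abstract Itô isometry inequality: for a simple adapted operator-valued
function `A(t) = Σ_k A_k 1_{(t_k,t_{k+1}]}(t)` whose values are `L_M(t_k)`-measurable
(condition (i): the restricted norms are constant in `s ∈ [t_k,T)`; condition (ii): partial
commutation with `E`),
`‖Σ_k A_k(M_{t_{k+1}} - M_{t_k})‖² ≤ Σ_k ‖A_k‖²_{L_M(t_k)} μ((t_k,t_{k+1}])`,
where `μ((t_k,t_{k+1}]) = ‖M_{t_{k+1}} - M_{t_k}‖²`. -/
theorem stmt3 {H : Type*} [NormedAddCommGroup H] [InnerProductSpace ℂ H] [CompleteSpace H]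
    (T : ℝ) (hT : 0 < T) (E : ℝ → H →L[ℂ] H) (M : H)
    (hproj : ∀ t, IsIdempotentElem (E t))
    (hsa : ∀ t, ContinuousLinearMap.adjoint (E t) = E t)
    (hmono : ∀ s t, s ≤ t → (E t).comp (E s) = E s ∧ (E s).comp (E t) = E s)
    (hT1 : E T = 1)
    (n : ℕ) (t : Fin (n + 1) → ℝ) (ht0 : t 0 = 0) (htlast : t (Fin.last n) = T)
    (htmono : StrictMono t)
    (A : Fin n → H →L[ℂ] H)
    (hnormeq : ∀ (k : Fin n) (s : ℝ), t k.castSucc ≤ s → s < T →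
      ‖(A k).comp (HMspan E M (t k.castSucc) T).subtypeL‖
        = ‖(A k).comp (HMspan E M s T).subtypeL‖)
    (hcomm : ∀ (k : Fin n), ∀ g ∈ HMspan E M (t k.castSucc) T, ∀ s : ℝ,
      t k.castSucc ≤ s → s ≤ T → A k (E s g) = E s (A k g)) :
    ‖∑ k : Fin n, A k (E (t k.succ) M - E (t k.castSucc) M)‖ ^ 2
      ≤ ∑ k : Fin n, ‖(A k).comp (HMspan E M (t k.castSucc) T).subtypeL‖ ^ 2
          * ‖E (t k.succ) M - E (t k.castSucc) M‖ ^ 2 :=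
  stmt3_general T E M hsa hmono n t htlast htmono A hcomm
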